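/- arXiv:1906.05651 — 13 statements merged into one kernel-verified Lean document; each statement's English description precedes it below -/
import Mathlib

section
/- Every transitive matrix is symmetric: if M ∈ ℝ^{d×d} is a transitive matrix, then M = Mᵀ. -/
open Matrix

/-- Every transitive matrix is symmetric. -/
theorem transitive_matrix_is_symmetric {d : ℕ} (M : Matrix (Fin d) (Fin d) ℝ)
    (hM : ∀ a b c : Fin d → ℝ,
      0 < a ⬝ᵥ M.mulVec b → 0 < b ⬝ᵥ M.mulVec c → 0 < a ⬝ᵥ M.mulVec c) :
    M = Mᵀ := by
  have hQ : ∀ x, 0 ≤ x ⬝ᵥ M.mulVec x := by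
    intro x
    by_contra h
    push_neg at h
    have h1 : 0 < x ⬝ᵥ M.mulVec (-x) := by
      rw [Matrix.mulVec_neg, dotProduct_neg]; linarith
    have h2 : 0 < (-x) ⬝ᵥ M.mulVec x := by
      rw [neg_dotProduct]; linarith
    have := hM x (-x) x h1 h2
    linarith
  have key : ∀ a b, 0 < a ⬝ᵥ M.mulVec b → 0 ≤ b ⬝ᵥ M.mulVec a := by
    intro a b hab
    by_contra h
    push_neg at h
    have h1 : 0 < b ⬝ᵥ M.mulVec (-a) := by
      rw [Matrix.mulVec_neg, dotProduct_neg]; linarith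
    have h2 := hM a b (-a) hab h1
    rw [Matrix.mulVec_neg, dotProduct_neg] at h2
    have := hQ a
    linarith
  have key3 : ∀ x y, 0 < x ⬝ᵥ M.mulVec x → x ⬝ᵥ M.mulVec y = y ⬝ᵥ M.mulVec x := by
    intro x y hQx
    by_contra hne
    set s := x ⬝ᵥ M.mulVec y with hs
    set t := y ⬝ᵥ M.mulVec x with ht
    set q := x ⬝ᵥ M.mulVec x with hq
    set lam : ℝ := (s + t) / (2 * q) with hlamdef
    set u : Fin d → ℝ := y - lam • x with hu
    have h1 : x ⬝ᵥ M.mulVec u = s - lam * q := by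
      rw [hu, Matrix.mulVec_sub, dotProduct_sub, Matrix.mulVec_smul, dotProduct_smul,
        smul_eq_mul, hs, hq]
    have h2 : u ⬝ᵥ M.mulVec x = t - lam * q := by
      rw [hu, sub_dotProduct, smul_dotProduct, smul_eq_mul, ht, hq]
    have hlam : lam * q = (s + t) / 2 := by
      rw [hlamdef]
      field_simp
    rcases lt_or_gt_of_ne hne with h | h
    · have hpos : 0 < u ⬝ᵥ M.mulVec x := by rw [h2, hlam]; linarith
      have := key u x hpos
      rw [h1, hlam] at this
      linarith
    · have hpos : 0 < x ⬝ᵥ M.mulVec u := by rw [h1, hlam]; linarith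
      have := key x u hpos
      rw [h2, hlam] at this
      linarith
  have hsym : ∀ a b, a ⬝ᵥ M.mulVec b = b ⬝ᵥ M.mulVec a := by
    intro a b
    rcases lt_or_eq_of_le (hQ a) with hQa | hQa
    · exact key3 a b hQa
    rcases lt_or_eq_of_le (hQ b) with hQb | hQb
    · exact (key3 b a hQb).symm
    by_contra hne
    set s := a ⬝ᵥ M.mulVec b with hs
    set t := b ⬝ᵥ M.mulVec a with ht
    rcases lt_trichotomy (s + t) 0 with hst | hst | hst
    · -- use a - b
      have hq : (a - b) ⬝ᵥ M.mulVec (a - b) = -(s + t) := by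
        simp only [Matrix.mulVec_sub, dotProduct_sub, sub_dotProduct, ← hQa, ← hQb,
          ← hs, ← ht]
        ring
      have h1 : (a - b) ⬝ᵥ M.mulVec a = -t := by
        simp only [sub_dotProduct, ← hQa, ← ht]; ring
      have h2 : a ⬝ᵥ M.mulVec (a - b) = -s := by
        simp only [Matrix.mulVec_sub, dotProduct_sub, ← hQa, ← hs]; ring
      have := key3 (a - b) a (by rw [hq]; linarith)
      rw [h1, h2] at this
      exact hne (by linarith)
    · -- s = -t, so s and t have opposite signs
      have hst' : t = -s := by linarith
      rcases lt_trichotomy s 0 with h | h | h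
      · have hpos : 0 < t := by rw [hst']; linarith
        have := key b a hpos
        rw [← hs] at this
        linarith
      · exact hne (by rw [hst', h]; ring)
      · have := key a b h
        have h2 : (0:ℝ) ≤ t := this
        linarith
    · -- use a + b
      have hq : (a + b) ⬝ᵥ M.mulVec (a + b) = s + t := by
        simp only [Matrix.mulVec_add, dotProduct_add, add_dotProduct, ← hQa, ← hQb,
          ← hs, ← ht]
        ring
      have h1 : (a + b) ⬝ᵥ M.mulVec b = s := by
        simp only [add_dotProduct, ← hQb, ← hs]; ring
      have h2 : b ⬝ᵥ M.mulVec (a + b) = t := by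
        simp only [Matrix.mulVec_add, dotProduct_add, ← hQb, ← ht]; ring
      have := key3 (a + b) b (by rw [hq]; linarith)
      rw [h1, h2] at this
      exact hne this
  ext i j
  have := hsym (Pi.single i 1) (Pi.single j 1)
  simpa [Matrix.mulVec_single, dotProduct, Pi.single_apply, Finset.sum_ite_eq,
    Matrix.transpose_apply] using this
end

section
/- Every transitive matrix is positive semi-definite: if M ∈ ℝ^{d×d} is a transitive matrix, then for every vector b ∈ ℝ^d, bᵀMb ≥ 0. -/
open Matrix

/-- Every transitive matrix is positive semi-definite. -/
theorem transitive_matrix_is_psd {d : ℕ} (M : Matrix (Fin d) (Fin d) ℝ)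
    (hM : ∀ a b c : Fin d → ℝ,
      0 < a ⬝ᵥ M.mulVec b → 0 < b ⬝ᵥ M.mulVec c → 0 < a ⬝ᵥ M.mulVec c) :
    ∀ b : Fin d → ℝ, 0 ≤ b ⬝ᵥ M.mulVec b := by
  intro b
  by_contra h
  push_neg at h
  have h1 : 0 < (-b) ⬝ᵥ M.mulVec b := by
    rwa [neg_dotProduct, neg_pos]
  have h2 : 0 < b ⬝ᵥ M.mulVec (-b) := by
    rwa [Matrix.mulVec_neg, dotProduct_neg, neg_pos]
  have h3 := hM (-b) b (-b) h1 h2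
  rw [neg_dotProduct, Matrix.mulVec_neg, dotProduct_neg, neg_neg] at h3
  linarith
end

section
/- If there exist vectors x, y ∈ ℝ^d such that xᵀMy > 0 but xᵀMᵀy < 0, then the matrix M ∈ ℝ^{d×d} is not transitive. -/
open Matrix

/-- If there exist x, y with xᵀMy > 0 but xᵀMᵀy < 0, then M is not transitive. -/
theorem not_transitive_of_sign_flip {d : ℕ} (M : Matrix (Fin d) (Fin d) ℝ)
    (h : ∃ x y : Fin d → ℝ, 0 < x ⬝ᵥ M.mulVec y ∧ x ⬝ᵥ Mᵀ.mulVec y < 0) :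
    ¬ (∀ a b c : Fin d → ℝ,
      0 < a ⬝ᵥ M.mulVec b → 0 < b ⬝ᵥ M.mulVec c → 0 < a ⬝ᵥ M.mulVec c) := by
  rintro htr
  obtain ⟨x, y, h1, h2⟩ := h
  have key : x ⬝ᵥ Mᵀ.mulVec y = y ⬝ᵥ M.mulVec x := by
    rw [Matrix.mulVec_transpose, dotProduct_comm, Matrix.dotProduct_mulVec]
  rw [key] at h2
  have h3 : 0 < y ⬝ᵥ M.mulVec (-x) := by
    rw [Matrix.mulVec_neg, dotProduct_neg]; linarith
  have h4 : 0 < x ⬝ᵥ M.mulVec (-x) := htr x y (-x) h1 h3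
  have h5 : x ⬝ᵥ M.mulVec x < 0 := by
    rw [Matrix.mulVec_neg, dotProduct_neg] at h4; linarith
  have h6 : 0 < x ⬝ᵥ M.mulVec (-x) := h4
  have h7 : 0 < (-x) ⬝ᵥ M.mulVec x := by
    rw [neg_dotProduct]; linarith
  have h8 := htr x (-x) x h6 h7
  linarith
end

section
/- Let a ∈ ℝ^d with a ≥ 0 componentwise, and let x, y ∈ ℝ^d be vectors that are componentwise nonnegative and satisfy ‖x − a‖ ≤ ‖a‖ and ‖y − a‖ ≤ ‖a‖ (i.e., x, y lie in the intersection of the nonnegative orthant with the closed Euclidean ball of radius ‖a‖ centered at a). Then ⟨x, y⟩ ≤ ⟨x + y, a⟩. -/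
open RealInnerProductSpace

/-- If a ≥ 0 and x, y lie in the nonnegative orthant intersected with the closed
ball B(a, ‖a‖), then ⟨x, y⟩ ≤ ⟨x + y, a⟩. -/
theorem inner_le_inner_add_of_mem_cone_ball {d : ℕ} (a x y : EuclideanSpace ℝ (Fin d))
    (ha : ∀ i, 0 ≤ a i) (hx : ∀ i, 0 ≤ x i) (hy : ∀ i, 0 ≤ y i)
    (hxa : ‖x - a‖ ≤ ‖a‖) (hya : ‖y - a‖ ≤ ‖a‖) :
    ⟪x, y⟫ ≤ ⟪x + y, a⟫ := by
  have hx2 : ‖x - a‖ ^ 2 ≤ ‖a‖ ^ 2 := pow_le_pow_left₀ (norm_nonneg _) hxa 2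
  have hy2 : ‖y - a‖ ^ 2 ≤ ‖a‖ ^ 2 := pow_le_pow_left₀ (norm_nonneg _) hya 2
  rw [norm_sub_sq_real] at hx2 hy2
  have hcs : ⟪x, y⟫ ≤ ‖x‖ * ‖y‖ := real_inner_le_norm x y
  rw [inner_add_left]
  nlinarith [sq_nonneg (‖x‖ - ‖y‖)]
end

section
/- If a matrix M ∈ ℝ^{d×d} is not symmetric (M ≠ Mᵀ), then M is not transitive; that is, there exist vectors a, b, c ∈ ℝ^d with aᵀMb > 0 and bᵀMc > 0 but aᵀMc ≤ 0. -/
open Matrix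

private lemma bilin_right {d : ℕ} (M : Matrix (Fin d) (Fin d) ℝ) (u v w : Fin d → ℝ) (s t : ℝ) :
    u ⬝ᵥ M.mulVec (s • v + t • w) = s * (u ⬝ᵥ M.mulVec v) + t * (u ⬝ᵥ M.mulVec w) := by
  simp [mulVec_add, mulVec_smul, dotProduct_add, dotProduct_smul, smul_eq_mul]

private lemma bilin_left {d : ℕ} (M : Matrix (Fin d) (Fin d) ℝ) (u v w : Fin d → ℝ) (s t : ℝ) :
    (s • v + t • w) ⬝ᵥ M.mulVec u = s * (v ⬝ᵥ M.mulVec u) + t * (w ⬝ᵥ M.mulVec u) := by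
  simp [add_dotProduct, smul_dotProduct, smul_eq_mul]

private lemma neg_right {d : ℕ} (M : Matrix (Fin d) (Fin d) ℝ) (u v : Fin d → ℝ) :
    u ⬝ᵥ M.mulVec (-v) = -(u ⬝ᵥ M.mulVec v) := by rw [Matrix.mulVec_neg, dotProduct_neg]

private lemma neg_left {d : ℕ} (M : Matrix (Fin d) (Fin d) ℝ) (u v : Fin d → ℝ) :
    (-v) ⬝ᵥ M.mulVec u = -(v ⬝ᵥ M.mulVec u) := by rw [neg_dotProduct]

private lemma key {d : ℕ} (M : Matrix (Fin d) (Fin d) ℝ) (u v : Fin d → ℝ)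
    (hpq : v ⬝ᵥ M.mulVec u < u ⬝ᵥ M.mulVec v) :
    ∃ a b c : Fin d → ℝ,
      0 < a ⬝ᵥ M.mulVec b ∧ 0 < b ⬝ᵥ M.mulVec c ∧ a ⬝ᵥ M.mulVec c ≤ 0 := by
  set p := u ⬝ᵥ M.mulVec v with hp
  set q := v ⬝ᵥ M.mulVec u with hq
  set τ := u ⬝ᵥ M.mulVec u with hτ
  set σ := v ⬝ᵥ M.mulVec v with hσ
  rcases lt_trichotomy τ 0 with hτ0 | hτ0 | hτ0
  · -- τ < 0
    have hτne : τ ≠ 0 := ne_of_lt hτ0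
    have ht : (|p| + |q| + 1)/τ * τ = |p| + |q| + 1 := div_mul_cancel₀ _ hτne
    refine ⟨u, (1:ℝ) • v + ((|p| + |q| + 1)/τ) • u, u, ?_, ?_, ?_⟩
    · rw [bilin_right, ← hp, ← hτ, ht]
      nlinarith [neg_abs_le p, abs_nonneg q]
    · rw [bilin_left, ← hq, ← hτ, ht]
      nlinarith [neg_abs_le q, abs_nonneg p]
    · rw [← hτ]; linarith
  · -- τ = 0
    rcases lt_trichotomy q 0 with hq0 | hq0 | hq0
    · rcases lt_trichotomy p 0 with hp0 | hp0 | hp0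
      · -- p < 0 : (u, -v, u)
        refine ⟨u, -v, u, ?_, ?_, ?_⟩
        · rw [neg_right, ← hp]; linarith
        · rw [neg_left, ← hq]; linarith
        · rw [← hτ]; linarith
      · -- p = 0, q < 0 : (v, ((σ+1)/q) • u - v, u)
        have hqne : q ≠ 0 := ne_of_lt hq0
        refine ⟨v, ((σ+1)/q) • u + (-1 : ℝ) • v, u, ?_, ?_, ?_⟩
        · rw [bilin_right, ← hq, ← hσ, div_mul_cancel₀ _ hqne]; linarith
        · rw [bilin_left, ← hτ, ← hq, hτ0]; linarith
        · rw [← hq]; linarith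
      · -- p > 0, q < 0 : (u, v, -u)
        refine ⟨u, v, -u, ?_, ?_, ?_⟩
        · rw [← hp]; linarith
        · rw [neg_right, ← hq]; linarith
        · rw [neg_right, ← hτ]; linarith
    · -- q = 0, p > 0
      have hp0 : 0 < p := by linarith
      have hpne : p ≠ 0 := ne_of_gt hp0
      refine ⟨u, ((-σ-1)/p) • u + (1 : ℝ) • v, -v, ?_, ?_, ?_⟩
      · rw [bilin_right, ← hτ, ← hp, hτ0]; linarith
      · rw [neg_right, bilin_left, ← hp, ← hσ, div_mul_cancel₀ _ hpne]; linarith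
      · rw [neg_right, ← hp]; linarith
    · -- q > 0 : (u, v, u)
      exact ⟨u, v, u, by rw [← hp]; linarith, by rw [← hq]; linarith, by rw [← hτ]; linarith⟩
  · -- τ > 0 : (u, v + (-(p+q)/(2τ)) • u, -u)
    have hτne : τ ≠ 0 := ne_of_gt hτ0
    have ht : (-(p+q)/(2*τ)) * τ = -(p+q)/2 := by field_simp
    refine ⟨u, (1:ℝ) • v + (-(p+q)/(2*τ)) • u, -u, ?_, ?_, ?_⟩
    · rw [bilin_right, ← hp, ← hτ, ht]; linarith
    · rw [neg_right, bilin_left, ← hq, ← hτ, ht]; linarith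
    · rw [neg_right, ← hτ]; linarith

/-- If M is not symmetric then M is not transitive: there exist a, b, c with
aᵀMb > 0 and bᵀMc > 0 but aᵀMc ≤ 0. -/
theorem exists_transitivity_violation_of_not_symm {d : ℕ}
    (M : Matrix (Fin d) (Fin d) ℝ) (h : M ≠ Mᵀ) :
    ∃ a b c : Fin d → ℝ,
      0 < a ⬝ᵥ M.mulVec b ∧ 0 < b ⬝ᵥ M.mulVec c ∧ a ⬝ᵥ M.mulVec c ≤ 0 := by
  have hij : ∃ i j, M j i ≠ M i j := by
    by_contra h'
    push_neg at h'
    exact h (by ext i j; rw [transpose_apply]; exact h' j i)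
  obtain ⟨i, j, hij⟩ := hij
  have hu : ∀ k l : Fin d,
      (Pi.single k 1 : Fin d → ℝ) ⬝ᵥ M.mulVec (Pi.single l 1) = M k l := by
    intro k l; simp [mulVec_single, single_dotProduct]
  rcases lt_or_gt_of_ne hij with hlt | hlt
  · exact key M (Pi.single i 1) (Pi.single j 1) (by rw [hu, hu]; exact hlt)
  · exact key M (Pi.single j 1) (Pi.single i 1) (by rw [hu, hu]; exact hlt)
end

section
/- Let M₁, M₀ ∈ ℝ^{d×d} and suppose the difference M₁ − M₀ is a transitive matrix. Then for all vectors a, b ∈ ℝ^d, aᵀM₁b > aᵀM₀b implies bᵀM₁a > bᵀM₀a. (Under the RESCAL bilinear scoring model s(v, r, v') = a_vᵀ M_r a_{v'} with relations r₁, r₀, this says that whenever the model predicts the forward edge it also predicts the reverse edge.) -/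
open Matrix

/-- If M₁ − M₀ is transitive, then a forward-edge prediction implies the
reverse-edge prediction. -/
theorem reverse_prediction_of_transitive_diff {d : ℕ}
    (M₁ M₀ : Matrix (Fin d) (Fin d) ℝ)
    (hM : ∀ a b c : Fin d → ℝ,
      0 < a ⬝ᵥ (M₁ - M₀).mulVec b → 0 < b ⬝ᵥ (M₁ - M₀).mulVec c →
        0 < a ⬝ᵥ (M₁ - M₀).mulVec c) :
    ∀ a b : Fin d → ℝ,
      a ⬝ᵥ M₀.mulVec b < a ⬝ᵥ M₁.mulVec b →
      b ⬝ᵥ M₀.mulVec a < b ⬝ᵥ M₁.mulVec a := by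
  intro a b h
  set N := M₁ - M₀ with hN
  set α := a ⬝ᵥ N.mulVec a with hα'
  set β := a ⬝ᵥ N.mulVec b with hβ'
  set γ := b ⬝ᵥ N.mulVec a with hγ'
  set δ := b ⬝ᵥ N.mulVec b with hδ'
  have hsub : ∀ x y : Fin d → ℝ,
      x ⬝ᵥ N.mulVec y = x ⬝ᵥ M₁.mulVec y - x ⬝ᵥ M₀.mulVec y := by
    intro x y
    simp [hN, Matrix.sub_mulVec, dotProduct_sub]
  have hβ : 0 < β := by rw [hβ', hsub]; linarith
  -- First: α > 0
  have hαpos : 0 < α := by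
    by_contra hc
    push_neg at hc
    set T : ℝ := (|δ| + 1) / β with hT
    have hTβ : T * β = |δ| + 1 := div_mul_cancel₀ _ (ne_of_gt hβ)
    have hTpos : 0 < T := div_pos (by positivity) hβ
    have h1 : 0 < a ⬝ᵥ N.mulVec (b - T • a) := by
      have : a ⬝ᵥ N.mulVec (b - T • a) = β - T * α := by
        simp [Matrix.mulVec_sub, Matrix.mulVec_smul, dotProduct_sub,
          dotProduct_smul, smul_eq_mul, hα', hβ']
      rw [this]
      nlinarith
    have h2 : 0 < (b - T • a) ⬝ᵥ N.mulVec (-b) := by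
      have : (b - T • a) ⬝ᵥ N.mulVec (-b) = T * β - δ := by
        simp [Matrix.mulVec_neg, dotProduct_neg, sub_dotProduct,
          smul_dotProduct, smul_eq_mul, hβ', hδ']
      rw [this, hTβ]
      have := abs_nonneg δ
      have := le_abs_self δ
      linarith
    have h3 := hM a (b - T • a) (-b) h1 h2
    have : a ⬝ᵥ N.mulVec (-b) = -β := by
      simp [Matrix.mulVec_neg, dotProduct_neg, hβ']
    rw [this] at h3
    linarith
  -- Now: γ > 0
  have hγpos : 0 < γ := by
    by_contra hc
    push_neg at hc
    set T : ℝ := (α + 1) / β with hT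
    have hTβ : T * β = α + 1 := div_mul_cancel₀ _ (ne_of_gt hβ)
    have hTpos : 0 < T := div_pos (by linarith) hβ
    have h1 : 0 < a ⬝ᵥ N.mulVec (T • b - a) := by
      have : a ⬝ᵥ N.mulVec (T • b - a) = T * β - α := by
        simp [Matrix.mulVec_sub, Matrix.mulVec_smul, dotProduct_sub,
          dotProduct_smul, smul_eq_mul, hα', hβ']
      rw [this, hTβ]; linarith
    have h2 : 0 < (T • b - a) ⬝ᵥ N.mulVec (-a) := by
      have : (T • b - a) ⬝ᵥ N.mulVec (-a) = α - T * γ := by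
        simp [Matrix.mulVec_neg, dotProduct_neg, sub_dotProduct,
          smul_dotProduct, smul_eq_mul, hα', hγ']
      rw [this]
      nlinarith
    have h3 := hM a (T • b - a) (-a) h1 h2
    have : a ⬝ᵥ N.mulVec (-a) = -α := by
      simp [Matrix.mulVec_neg, dotProduct_neg, hα']
    rw [this] at h3
    linarith
  rw [hγ', hsub] at hγpos
  linarith
end

section
/- Let r, r', t ∈ ℝ^d satisfy the componentwise inequalities r ≤ r' ≤ −r and t ≥ 0. Then ‖r' − t‖ ≤ ‖r − t‖. (This shows the constraints r ≤ r' ≤ −r, together with nonnegative tuple embeddings, are sufficient to enforce the relational implication rule RelImp(r, r') under the L2-distance score.) -/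
/-- The componentwise constraints r ≤ r' ≤ −r, with nonnegative t, enforce
RelImp(r, r') under the L2-distance score. -/
theorem relImp_L2_of_componentwise {d : ℕ} (r r' t : EuclideanSpace ℝ (Fin d))
    (h₁ : ∀ i, r i ≤ r' i) (h₂ : ∀ i, r' i ≤ -r i) (ht : ∀ i, 0 ≤ t i) :
    ‖r' - t‖ ≤ ‖r - t‖ := by
  rw [EuclideanSpace.norm_eq, EuclideanSpace.norm_eq]
  apply Real.sqrt_le_sqrt
  apply Finset.sum_le_sum
  intro i _
  simp only [PiLp.sub_apply, Real.norm_eq_abs, sq_abs]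
  nlinarith [h₁ i, h₂ i, ht i]
end

section
/- Let r₁, r₂, r₁', r₂', x, y ∈ ℝ^d satisfy the componentwise inequalities r₁ ≤ r₂' ≤ −r₁, r₂ ≤ r₁' ≤ −r₂, x ≥ 0, and y ≥ 0. Then ‖r₁' − y‖² + ‖r₂' − x‖² ≤ ‖r₁ − x‖² + ‖r₂ − y‖²; hence under the L2-distance score with concatenated entity embeddings, the score of (r', (y, x)) is at least the score of (r, (x, y)), enforcing the reverse implication rule RevImp(r, r'). -/
lemma key_s10 {a b t : ℝ} (hab : a ≤ b) (hba : b ≤ -a) (ht : 0 ≤ t) :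
    (b - t) ^ 2 ≤ (a - t) ^ 2 := by nlinarith

/-- Sufficient constraints for the reverse implication rule RevImp(r, r') under
the L2-distance score (Model C). -/
theorem revImp_modelC {d : ℕ} (r₁ r₂ r₁' r₂' x y : EuclideanSpace ℝ (Fin d))
    (h₁ : ∀ i, r₁ i ≤ r₂' i) (h₂ : ∀ i, r₂' i ≤ -r₁ i)
    (h₃ : ∀ i, r₂ i ≤ r₁' i) (h₄ : ∀ i, r₁' i ≤ -r₂ i)
    (hx : ∀ i, 0 ≤ x i) (hy : ∀ i, 0 ≤ y i) :
    ‖r₁' - y‖ ^ 2 + ‖r₂' - x‖ ^ 2 ≤ ‖r₁ - x‖ ^ 2 + ‖r₂ - y‖ ^ 2 := by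
  have hns : ∀ v : EuclideanSpace ℝ (Fin d), ‖v‖ ^ 2 = ∑ i, (v i) ^ 2 := by
    intro v
    rw [EuclideanSpace.norm_eq, Real.sq_sqrt (by positivity)]
    simp [sq_abs]
  simp only [hns]
  have h1 : ∑ i, ((r₁' - y) i) ^ 2 ≤ ∑ i, ((r₂ - y) i) ^ 2 := by
    apply Finset.sum_le_sum
    intro i _
    simpa using key_s10 (h₃ i) (h₄ i) (hy i)
  have h2 : ∑ i, ((r₂' - x) i) ^ 2 ≤ ∑ i, ((r₁ - x) i) ^ 2 := by
    apply Finset.sum_le_sum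
    intro i _
    simpa using key_s10 (h₁ i) (h₂ i) (hx i)
  linarith
end

section
/- Let r₁, r₂, r₁', r₂', e, e' ∈ ℝ^d satisfy the componentwise inequalities r₁ ≤ r₁' ≤ −r₁, r₂ − e ≤ r₂' − e', and r₂' + r₂ ≤ e' + e. Then for every vector x ∈ ℝ^d with x ≥ 0 componentwise, ‖r₁' − x‖² + ‖r₂' − e'‖² ≤ ‖r₁ − x‖² + ‖r₂ − e‖²; hence under the L2-distance score, the score of (r', (x, e')) is at least the score of (r, (x, e)), enforcing the type-B entailment rule Entail_B(r, e, r', e'). -/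
lemma sq_norm_eq {d : ℕ} (v : EuclideanSpace ℝ (Fin d)) :
    ‖v‖ ^ 2 = ∑ i, v i ^ 2 := by
  rw [EuclideanSpace.norm_eq, Real.sq_sqrt (by positivity)]
  simp [sq_abs]

/-- Sufficient constraints for the type-B entailment rule Entail_B(r, e, r', e')
under the L2-distance score (Model C). -/
theorem entailB_modelC {d : ℕ} (r₁ r₂ r₁' r₂' e e' : EuclideanSpace ℝ (Fin d))
    (h₁ : ∀ i, r₁ i ≤ r₁' i) (h₂ : ∀ i, r₁' i ≤ -r₁ i)
    (h₃ : ∀ i, r₂ i - e i ≤ r₂' i - e' i)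
    (h₄ : ∀ i, r₂' i + r₂ i ≤ e' i + e i) :
    ∀ x : EuclideanSpace ℝ (Fin d), (∀ i, 0 ≤ x i) →
      ‖r₁' - x‖ ^ 2 + ‖r₂' - e'‖ ^ 2 ≤ ‖r₁ - x‖ ^ 2 + ‖r₂ - e‖ ^ 2 := by
  intro x hx
  rw [sq_norm_eq, sq_norm_eq, sq_norm_eq, sq_norm_eq, ← Finset.sum_add_distrib,
    ← Finset.sum_add_distrib]
  apply Finset.sum_le_sum
  intro i _
  simp only [PiLp.sub_apply]
  nlinarith [h₁ i, h₂ i, h₃ i, h₄ i, hx i]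
end

section
/- Let λ ∈ (0, 1) and let r₁, r₂, r₁', r₂', r₁'', r₂'', e', e'' ∈ ℝ^d satisfy the componentwise inequalities r₁'' ≥ λr₁ and λr₂ + (1−λ)r₁' ≤ 0, together with ⟨e'', r₂''⟩ ≥ (1−λ)⟨e', r₂'⟩. Then for all vectors x, y ∈ ℝ^d with x ≥ 0 and y ≥ 0 componentwise, ⟨r₁'', x⟩ + ⟨r₂'', e''⟩ ≥ λ(⟨r₁, x⟩ + ⟨r₂, y⟩) + (1−λ)(⟨r₁', y⟩ + ⟨r₂', e'⟩) ≥ min(⟨r₁, x⟩ + ⟨r₂, y⟩, ⟨r₁', y⟩ + ⟨r₂', e'⟩); that is, under Model A the score of the consequent fact (r'', (x, e'')) is at least the minimum of the scores of the two antecedent facts, enforcing the property-transitivity rule ProTrans(r, r', e', r'', e''). -/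
open RealInnerProductSpace

theorem EuclideanSpace.inner_le_inner_of_le_of_nonneg {ι : Type*} [Fintype ι]
    {a b x : EuclideanSpace ℝ ι} (hab : ∀ i, a i ≤ b i) (hx : ∀ i, 0 ≤ x i) :
    ⟪a, x⟫ ≤ ⟪b, x⟫ := by
  simp only [PiLp.inner_apply, RCLike.inner_apply, conj_trivial]
  exact Finset.sum_le_sum fun i _ => mul_le_mul_of_nonneg_left (hab i) (hx i)

/-- Sufficient constraints for the property-transitivity rule
ProTrans(r, r', e', r'', e'') under the inner-product score (Model A). -/
theorem proTrans_modelA {d : ℕ} (l : ℝ) (hl₀ : 0 < l) (hl₁ : l < 1)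
    (r₁ r₂ r₁' r₂' r₁'' r₂'' e' e'' : EuclideanSpace ℝ (Fin d))
    (h₁ : ∀ i, l * r₁ i ≤ r₁'' i)
    (h₂ : ∀ i, l * r₂ i + (1 - l) * r₁' i ≤ 0)
    (h₃ : (1 - l) * ⟪e', r₂'⟫ ≤ ⟪e'', r₂''⟫) :
    ∀ x y : EuclideanSpace ℝ (Fin d), (∀ i, 0 ≤ x i) → (∀ i, 0 ≤ y i) →
      l * (⟪r₁, x⟫ + ⟪r₂, y⟫) + (1 - l) * (⟪r₁', y⟫ + ⟪r₂', e'⟫)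
          ≤ ⟪r₁'', x⟫ + ⟪r₂'', e''⟫ ∧
      min (⟪r₁, x⟫ + ⟪r₂, y⟫) (⟪r₁', y⟫ + ⟪r₂', e'⟫)
          ≤ l * (⟪r₁, x⟫ + ⟪r₂, y⟫) + (1 - l) * (⟪r₁', y⟫ + ⟪r₂', e'⟫) := by
  intro x y hx hy
  have head : l * ⟪r₁, x⟫ ≤ ⟪r₁'', x⟫ := by
    simpa [inner_smul_left] using
      EuclideanSpace.inner_le_inner_of_le_of_nonneg (a := l • r₁) (b := r₁'') h₁ hx
  have middle : l * ⟪r₂, y⟫ + (1 - l) * ⟪r₁', y⟫ ≤ 0 := by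
    simpa [inner_add_left, inner_smul_left] using
      EuclideanSpace.inner_le_inner_of_le_of_nonneg
        (a := l • r₂ + (1 - l) • r₁') (b := 0) h₂ hy
  have tail : (1 - l) * ⟪r₂', e'⟫ ≤ ⟪r₂'', e''⟫ := by
    rwa [real_inner_comm r₂', real_inner_comm r₂''] at h₃
  refine ⟨by linarith, ?_⟩
  exact Convex.min_le_combo _ _ hl₀.le (sub_nonneg.2 hl₁.le) (add_sub_cancel l 1)
end

section
/- Let r₁, r₂, r₁', r₂', e ∈ ℝ^d satisfy r₁' ≥ r₁ componentwise, ⟨e, r₂'⟩ ≥ 0, and r₂ ≤ 0 componentwise. Then for all vectors x, y ∈ ℝ^d with x ≥ 0 and y ≥ 0 componentwise, ⟨r₁', x⟩ + ⟨r₂', e⟩ ≥ ⟨r₁, x⟩ + ⟨r₂, y⟩; that is, under Model A the score of (r', (x, e)) is at least the score of (r, (x, y)), enforcing the type implication rule TypeImp(r, e, r'). -/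
open RealInnerProductSpace

/-- Sufficient constraints for the type implication rule TypeImp(r, e, r')
under the inner-product score (Model A). -/
theorem typeImp_modelA {d : ℕ} (r₁ r₂ r₁' r₂' e : EuclideanSpace ℝ (Fin d))
    (h₁ : ∀ i, r₁ i ≤ r₁' i) (h₂ : 0 ≤ ⟪e, r₂'⟫) (h₃ : ∀ i, r₂ i ≤ 0) :
    ∀ x y : EuclideanSpace ℝ (Fin d), (∀ i, 0 ≤ x i) → (∀ i, 0 ≤ y i) →
      ⟪r₁, x⟫ + ⟪r₂, y⟫ ≤ ⟪r₁', x⟫ + ⟪r₂', e⟫ := by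
  intro x y hx hy
  have key : ∀ a b : EuclideanSpace ℝ (Fin d), ⟪a, b⟫ = ∑ i, a i * b i := by
    intro a b
    simp [PiLp.inner_apply, RCLike.inner_apply, mul_comm]
  rw [key r₁ x, key r₂ y, key r₁' x]
  have h2' : (0:ℝ) ≤ ⟪r₂', e⟫ := by rwa [real_inner_comm] at h₂
  have h4 : ∑ i, r₂ i * y i ≤ 0 :=
    Finset.sum_nonpos fun i _ => mul_nonpos_of_nonpos_of_nonneg (h₃ i) (hy i)
  have h5 : ∑ i, r₁ i * x i ≤ ∑ i, r₁' i * x i :=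
    Finset.sum_le_sum fun i _ => mul_le_mul_of_nonneg_right (h₁ i) (hx i)
  linarith
end

section
/- Let r₁, r₂, r₁', r₂', e ∈ ℝ^d satisfy e + r₁' = r₁ − r₂, ⟨r₂', e⟩ ≥ 0, and −r₂ ≥ 0 componentwise. Then for all vectors x, y ∈ ℝ^d that are componentwise nonnegative and satisfy ‖x − (−r₂)‖ ≤ ‖r₂‖ and ‖y − (−r₂)‖ ≤ ‖r₂‖, it holds that ⟨r₁', x⟩ + ⟨r₂', e⟩ + ⟨x, e⟩ ≥ ⟨r₁, x⟩ + ⟨r₂, y⟩ + ⟨x, y⟩; that is, under Model B the score of (r', (x, e)) is at least the score of (r, (x, y)), enforcing the type implication rule TypeImp(r, e, r'). -/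
open RealInnerProductSpace

/-- Sufficient constraints for the type implication rule TypeImp(r, e, r')
under the score of Model B. -/
theorem typeImp_modelB {d : ℕ} (r₁ r₂ r₁' r₂' e : EuclideanSpace ℝ (Fin d))
    (h₁ : e + r₁' = r₁ - r₂) (h₂ : 0 ≤ ⟪r₂', e⟫) (h₃ : ∀ i, 0 ≤ -r₂ i) :
    ∀ x y : EuclideanSpace ℝ (Fin d),
      (∀ i, 0 ≤ x i) → (∀ i, 0 ≤ y i) →
      ‖x - (-r₂)‖ ≤ ‖r₂‖ → ‖y - (-r₂)‖ ≤ ‖r₂‖ →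
      ⟪r₁, x⟫ + ⟪r₂, y⟫ + ⟪x, y⟫ ≤ ⟪r₁', x⟫ + ⟪r₂', e⟫ + ⟪x, e⟫ := by
  intro x y hx hy hbx hby
  have hr : r₁' = r₁ - r₂ - e := eq_sub_of_add_eq' h₁
  rw [sub_neg_eq_add] at hbx hby
  have hx2 : ‖x‖ ^ 2 + 2 * ⟪x, r₂⟫ ≤ 0 := by
    have h := norm_add_sq_real x r₂
    have h' : ‖x + r₂‖ * ‖x + r₂‖ ≤ ‖r₂‖ * ‖r₂‖ :=
      mul_self_le_mul_self (norm_nonneg _) hbx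
    nlinarith [sq_nonneg (‖x + r₂‖)]
  have hy2 : ‖y‖ ^ 2 + 2 * ⟪y, r₂⟫ ≤ 0 := by
    have h := norm_add_sq_real y r₂
    have h' : ‖y + r₂‖ * ‖y + r₂‖ ≤ ‖r₂‖ * ‖r₂‖ :=
      mul_self_le_mul_self (norm_nonneg _) hby
    nlinarith [sq_nonneg (‖y + r₂‖)]
  rw [hr, inner_sub_left, inner_sub_left]
  have hc1 : ⟪e, x⟫ = ⟪x, e⟫ := real_inner_comm x e
  have hc2 : ⟪r₂, x⟫ = ⟪x, r₂⟫ := real_inner_comm x r₂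
  have hc3 : ⟪r₂, y⟫ = ⟪y, r₂⟫ := real_inner_comm y r₂
  have hxy : ⟪x, y⟫ ≤ ‖x‖ * ‖y‖ := real_inner_le_norm x y
  nlinarith [sq_nonneg (‖x‖ - ‖y‖)]
end

section
/- Let ρ > 0 and let r, r' ∈ ℝ^d satisfy r + r' = 4ρ(r − r') and ‖r − r'‖ ≥ 1. Then for all vectors e, e' ∈ ℝ^d with ‖e‖ ≤ ρ and ‖e'‖ ≤ ρ, it holds that ‖r' − (e − e')‖ ≤ ‖r − (e − e')‖; that is, under the translation (TransE-style) model where the tuple embedding of an entity pair is t = e − e' and the score is −‖r − t‖, the constraints r + r' = 4ρ(r − r') and ‖r − r'‖ ≥ 1 together with entity embeddings constrained to the ball B(0, ρ) enforce the relational implication rule RelImp(r, r'). -/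
/-!
For t = e − e' we have ‖t‖ ≤ 2ρ. Writing δ = r − r', the hypothesis r + r' = 4ρ δ gives
‖r − t‖² − ‖r' − t‖² = ⟪r + r' − 2t, δ⟫ = 4ρ‖δ‖² − 2⟪t, δ⟫ ≥ 4ρ‖δ‖(‖δ‖ − 1) ≥ 0
by Cauchy–Schwarz and ‖δ‖ ≥ 1.
-/

section

open scoped RealInnerProductSpace

variable {E : Type*} [NormedAddCommGroup E] [InnerProductSpace ℝ E]

theorem real_inner_add_sub_eq_norm_sq_sub_norm_sq (x y : E) :
    ⟪x + y, x - y⟫ = ‖x‖ ^ 2 - ‖y‖ ^ 2 := by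
  rw [inner_add_left, inner_sub_right, inner_sub_right, real_inner_self_eq_norm_sq,
    real_inner_self_eq_norm_sq, real_inner_comm x y]
  ring

theorem norm_sub_le_norm_sub_of_add_eq_smul_sub {c : ℝ} {r r' t : E}
    (hsum : r + r' = c • (r - r')) (hdiff : 1 ≤ ‖r - r'‖) (ht : 2 * ‖t‖ ≤ c) :
    ‖r' - t‖ ≤ ‖r - t‖ := by
  set δ := r - r'
  have hsum' : (r - t) + (r' - t) = c • δ - (2 : ℝ) • t := by rw [← hsum, two_smul]; abel
  have hgap : ‖r - t‖ ^ 2 - ‖r' - t‖ ^ 2 = c * ‖δ‖ ^ 2 - 2 * ⟪t, δ⟫ := by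
    rw [← real_inner_add_sub_eq_norm_sq_sub_norm_sq, hsum', sub_sub_sub_cancel_right,
      inner_sub_left, real_inner_smul_left, real_inner_smul_left, real_inner_self_eq_norm_sq]
  have hcs : ⟪t, δ⟫ ≤ ‖t‖ * ‖δ‖ := real_inner_le_norm t δ
  rw [← sq_le_sq₀ (norm_nonneg _) (norm_nonneg _)]
  nlinarith [norm_nonneg t, mul_le_mul_of_nonneg_left hdiff (norm_nonneg δ)]

end

theorem relImp_translation_model_general {d : ℕ} (ρ : ℝ)
    (r r' : EuclideanSpace ℝ (Fin d))
    (hsum : r + r' = (4 * ρ) • (r - r')) (hdiff : 1 ≤ ‖r - r'‖) :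
    ∀ e e' : EuclideanSpace ℝ (Fin d), ‖e‖ ≤ ρ → ‖e'‖ ≤ ρ →
      ‖r' - (e - e')‖ ≤ ‖r - (e - e')‖ := by
  intro e e' he he'
  refine norm_sub_le_norm_sub_of_add_eq_smul_sub hsum hdiff ?_
  linarith [norm_sub_le e e']

/-- Under the translation model with entity embeddings in B(0, ρ), the
constraints r + r' = 4ρ(r − r') and ‖r − r'‖ ≥ 1 enforce RelImp(r, r'). -/
theorem relImp_translation_model {d : ℕ} (ρ : ℝ) (hρ : 0 < ρ)
    (r r' : EuclideanSpace ℝ (Fin d))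
    (hsum : r + r' = (4 * ρ) • (r - r')) (hdiff : 1 ≤ ‖r - r'‖) :
    ∀ e e' : EuclideanSpace ℝ (Fin d), ‖e‖ ≤ ρ → ‖e'‖ ≤ ρ →
      ‖r' - (e - e')‖ ≤ ‖r - (e - e')‖ :=
  relImp_translation_model_general ρ r r' hsum hdiff
end
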